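/- arXiv:2107.11819 — 2 statements merged into one kernel-verified Lean document; each statement's English description precedes it below -/
import Mathlib

section
/- Let d ≥ 1 and K > 0. There is a constant C = C(d,K) such that for all 0 < ε ≤ 1/2, all t with 0 < t ≤ 1, all γ ∈ ℝ and all ξ̃ ∈ ℝ^d with |ξ̃| ≤ K ε^{−1}, one has ∫_{|ξ| ≤ K ε^{−1}} dξ / |γ + ξ̃·ξ + i/t| ≤ C ε^{1−d} · min(1/|ξ̃|, t/ε) · (1 + |log ε|). -/
/-! The integrand is at most `t`, so the integral is at most `t · vol(B(0, K/ε)) ≍ ε^{1-d} · t/ε`.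
For `ξ̃ ≠ 0`, a rotation taking `ξ̃/|ξ̃|` to a coordinate vector and the inclusion of the ball in a
cube of side `2K/ε` reduce the integral to `(2K/ε)^{d-1}` times the one-dimensional integral of
`1/|γ + |ξ̃| s + i/t| ≤ 2/(|γ + |ξ̃| s| + 1/t)` over `|s| ≤ K/ε`. That integral is logarithmic:
at most `4 |ξ̃|⁻¹ log(1 + 2K²/ε²) ≲ |ξ̃|⁻¹ (1 + |log ε|)`. -/

open MeasureTheory Real Metric

lemma integral_inv_abs_add_le_log_of_nonneg {A B b : ℝ} (hb : 0 < b) (hA : 0 ≤ A)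
    (hAB : A ≤ B) :
    ∫ u in A..B, (|u| + b)⁻¹ ≤ log (1 + (B - A) / b) := by
  have hshift : ∫ u in A..B, (|u| + b)⁻¹ = ∫ u in A + b..B + b, u⁻¹ := by
    rw [← intervalIntegral.integral_comp_add_right]
    refine intervalIntegral.integral_congr fun u hu => ?_
    rw [Set.uIcc_of_le hAB] at hu
    simp only [abs_of_nonneg (hA.trans hu.1)]
  rw [hshift, integral_inv_of_pos (by linarith) (by linarith)]
  refine log_le_log (div_pos (by linarith) (by linarith)) ?_
  have key : B - A ≤ (B - A) / b * (A + b) := by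
    rw [div_mul_eq_mul_div, le_div_iff₀ hb]; nlinarith
  rw [div_le_iff₀ (by linarith)]
  linear_combination key

lemma integral_inv_abs_add_le_log {A B b : ℝ} (hb : 0 < b) (hAB : A ≤ B) :
    ∫ u in A..B, (|u| + b)⁻¹ ≤ 2 * log (1 + (B - A) / b) := by
  have hflip : ∀ A' B', ∫ u in A'..B', (|u| + b)⁻¹ = ∫ u in -B'..-A', (|u| + b)⁻¹ :=
    fun A' B' => by
      simpa only [abs_neg] using intervalIntegral.integral_comp_neg (fun u => (|u| + b)⁻¹)
  have hmono : ∀ x, 0 ≤ x → x ≤ B - A → log (1 + x / b) ≤ log (1 + (B - A) / b) :=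
    fun x hx hxBA => log_le_log (by positivity) (by gcongr)
  have hlog : 0 ≤ log (1 + (B - A) / b) :=
    log_nonneg (by linarith [div_nonneg (sub_nonneg.2 hAB) hb.le])
  rcases le_total 0 A with hA | hA
  · linarith [integral_inv_abs_add_le_log_of_nonneg hb hA hAB]
  rcases le_total B 0 with hB | hB
  · have h := integral_inv_abs_add_le_log_of_nonneg hb (neg_nonneg.2 hB) (neg_le_neg hAB)
    rw [neg_sub_neg] at h
    linarith [hflip A B]
  · have hint : Continuous fun u : ℝ => (|u| + b)⁻¹ :=
      (continuous_abs.add continuous_const).inv₀ fun u =>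
        (add_pos_of_nonneg_of_pos (abs_nonneg u) hb).ne'
    rw [← intervalIntegral.integral_add_adjacent_intervals (b := 0) (hint.intervalIntegrable _ _)
      (hint.intervalIntegrable _ _), hflip A 0, neg_zero]
    have hneg := integral_inv_abs_add_le_log_of_nonneg hb le_rfl (neg_nonneg.2 hA)
    have hpos := integral_inv_abs_add_le_log_of_nonneg hb le_rfl hB
    linarith [hmono (-A - 0) (by linarith) (by linarith),
      hmono (B - 0) (by linarith) (by linarith)]

lemma integral_inv_abs_mul_add_add_le_log {a b R : ℝ} (γ : ℝ) (ha : 0 < a) (hb : 0 < b)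
    (hR : 0 ≤ R) :
    ∫ s in -R..R, (|a * s + γ| + b)⁻¹ ≤ 2 / a * log (1 + 2 * R * a / b) := by
  rw [intervalIntegral.integral_comp_mul_add (fun u => (|u| + b)⁻¹) ha.ne', smul_eq_mul]
  have h := integral_inv_abs_add_le_log (A := a * -R + γ) (B := a * R + γ) hb (by nlinarith)
  rw [show a * R + γ - (a * -R + γ) = 2 * R * a by ring] at h
  calc a⁻¹ * ∫ u in a * -R + γ..a * R + γ, (|u| + b)⁻¹
      ≤ a⁻¹ * (2 * log (1 + 2 * R * a / b)) := by gcongr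
    _ = 2 / a * log (1 + 2 * R * a / b) := by ring

lemma LinearIsometryEquiv.setIntegral_closedBall_comp {E F : Type*} [NormedAddCommGroup E]
    [InnerProductSpace ℝ E] [FiniteDimensional ℝ E] [MeasurableSpace E] [BorelSpace E]
    [NormedAddCommGroup F] [NormedSpace ℝ F] (T : E ≃ₗᵢ[ℝ] E) (f : E → F) (R : ℝ) :
    ∫ x in closedBall 0 R, f (T x) = ∫ x in closedBall 0 R, f x := by
  have h := T.measurePreserving.setIntegral_preimage_emb T.toHomeomorph.measurableEmbedding f
    (closedBall 0 R)
  rwa [T.preimage_closedBall, map_zero] at h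

lemma EuclideanSpace.exists_linearIsometryEquiv_single_eq {ι : Type*} [Fintype ι]
    [DecidableEq ι] (i : ι) {e : EuclideanSpace ℝ ι} (he : ‖e‖ = 1) :
    ∃ T : EuclideanSpace ℝ ι ≃ₗᵢ[ℝ] EuclideanSpace ℝ ι, T (EuclideanSpace.single i 1) = e := by
  have hortho : Orthonormal ℝ (({i} : Set ι).domRestrict fun _ => e) :=
    ⟨fun _ => he, fun j k hjk => absurd (Subtype.ext (j.2.trans k.2.symm)) hjk⟩
  obtain ⟨b, hb⟩ := hortho.exists_orthonormalBasis_extension_of_card_eq finrank_euclideanSpace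
  exact ⟨b.repr.symm, by rw [b.repr_symm_single, hb i rfl]⟩

lemma setIntegral_closedBall_comp_apply_le {ι : Type*} [Fintype ι] [DecidableEq ι] (i : ι)
    {g : ℝ → ℝ} (hg : Continuous g) (hg0 : ∀ s, 0 ≤ g s) {R : ℝ} (hR : 0 ≤ R) :
    ∫ x in closedBall (0 : EuclideanSpace ℝ ι) R, g (x i) ≤
      (2 * R) ^ (Fintype.card ι - 1) * ∫ s in -R..R, g s := by
  set box : Set (ι → ℝ) := Set.univ.pi fun _ => Set.Icc (-R) R
  have hsub : WithLp.toLp 2 ⁻¹' closedBall (0 : EuclideanSpace ℝ ι) R ⊆ box := fun y hy j _ =>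
    abs_le.1 ((PiLp.norm_apply_le (WithLp.toLp 2 y) j).trans (mem_closedBall_zero_iff.1 hy))
  have hint : IntegrableOn (fun y : ι → ℝ => g (y i)) box :=
    (hg.comp (continuous_apply i)).continuousOn.integrableOn_compact
      (isCompact_univ_pi fun _ => isCompact_Icc)
  have hIcc : ∀ f : ℝ → ℝ, ∫ s in Set.Icc (-R) R, f s = ∫ s in -R..R, f s := fun f => by
    rw [integral_Icc_eq_integral_Ioc, intervalIntegral.integral_of_le (by linarith)]
  calc ∫ x in closedBall (0 : EuclideanSpace ℝ ι) R, g (x i)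
      = ∫ y in WithLp.toLp 2 ⁻¹' closedBall (0 : EuclideanSpace ℝ ι) R, g (y i) :=
        ((PiLp.volume_preserving_toLp ι).setIntegral_preimage_emb
          (MeasurableEquiv.toLp 2 (ι → ℝ)).measurableEmbedding _ _).symm
    _ ≤ ∫ y in box, g (y i) :=
        setIntegral_mono_set hint (ae_of_all _ fun _ => hg0 _) hsub.eventuallyLE
    _ = ∏ j, ∫ s in Set.Icc (-R) R, Function.update (fun _ _ => 1) i g j s := by
        rw [volume_pi, Measure.restrict_pi_pi, ← integral_fintype_prod_eq_prod]
        congr with y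
        rw [Finset.prod_eq_single i (fun j _ hj => by simp [hj]) (by simp)]
        simp
    _ = (2 * R) ^ (Fintype.card ι - 1) * ∫ s in -R..R, g s := by
        have hconst : ∀ j ∈ ({i}ᶜ : Finset ι),
            ∫ s in Set.Icc (-R) R, Function.update (fun _ _ => (1 : ℝ)) i g j s = 2 * R :=
          fun j hj => by
            rw [Finset.mem_compl, Finset.mem_singleton] at hj
            simp only [ne_eq, hj, not_false_eq_true, Function.update_of_ne, integral_const,
              measureReal_restrict_apply_univ, Real.volume_real_Icc, smul_eq_mul, mul_one]
            rw [max_eq_left (by linarith)]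
            ring
        rw [Fintype.prod_eq_mul_prod_compl i, Finset.prod_congr rfl hconst, Finset.prod_const,
          Finset.card_compl, Finset.card_singleton, Function.update_self, hIcc, mul_comm]

lemma setIntegral_closedBall_comp_inner_le {ι : Type*} [Fintype ι] {v : EuclideanSpace ℝ ι}
    (hv : v ≠ 0) {g : ℝ → ℝ} (hg : Continuous g) (hg0 : ∀ s, 0 ≤ g s) {R : ℝ} (hR : 0 ≤ R) :
    ∫ x in closedBall (0 : EuclideanSpace ℝ ι) R, g (inner ℝ v x) ≤
      (2 * R) ^ (Fintype.card ι - 1) * ∫ s in -R..R, g (‖v‖ * s) := by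
  classical
  obtain ⟨i⟩ : Nonempty ι := by
    by_contra h
    rw [not_nonempty_iff] at h
    exact hv (Subsingleton.elim _ _)
  have hnorm : 0 < ‖v‖ := norm_pos_iff.2 hv
  obtain ⟨T, hT⟩ := EuclideanSpace.exists_linearIsometryEquiv_single_eq i (e := ‖v‖⁻¹ • v)
    (by rw [norm_smul, norm_inv, norm_norm, inv_mul_cancel₀ hnorm.ne'])
  have hv' : v = ‖v‖ • T (EuclideanSpace.single i 1) := by rw [hT, smul_inv_smul₀ hnorm.ne']
  have hinner : ∀ x, inner ℝ v (T x) = ‖v‖ * x i := fun x => by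
    nth_rewrite 1 [hv']
    rw [real_inner_smul_left, T.inner_map_map, EuclideanSpace.inner_single_left]
    simp
  rw [← T.setIntegral_closedBall_comp]
  simp only [hinner]
  exact setIntegral_closedBall_comp_apply_le i (hg.comp (continuous_const_mul _))
    (fun _ => hg0 _) hR

lemma Complex.im_ofReal_add_ofReal_add_I_div (γ x t : ℝ) :
    ((γ : ℂ) + (x : ℂ) + Complex.I / (t : ℂ)).im = t⁻¹ := by
  simp [Complex.div_ofReal_im]

lemma Complex.re_ofReal_add_ofReal_add_I_div (γ x t : ℝ) :
    ((γ : ℂ) + (x : ℂ) + Complex.I / (t : ℂ)).re = x + γ := by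
  simp [Complex.div_ofReal_re]; ring

noncomputable def vertexKernel (γ t x : ℝ) : ℝ :=
  1 / ‖(γ : ℂ) + (x : ℂ) + Complex.I / (t : ℂ)‖

section vertexKernel

variable {γ t : ℝ}

lemma vertexKernel_nonneg (x : ℝ) : 0 ≤ vertexKernel γ t x := by
  unfold vertexKernel; positivity

lemma continuous_vertexKernel (ht : 0 < t) : Continuous (vertexKernel γ t) := by
  refine continuous_const.div (by fun_prop) fun x hx => ?_
  have h := Complex.abs_im_le_norm ((γ : ℂ) + (x : ℂ) + Complex.I / (t : ℂ))
  rw [Complex.im_ofReal_add_ofReal_add_I_div, hx, abs_nonpos_iff, inv_eq_zero] at h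
  exact ht.ne' h

lemma vertexKernel_le (ht : 0 < t) (x : ℝ) : vertexKernel γ t x ≤ t := by
  have h := Complex.abs_im_le_norm ((γ : ℂ) + (x : ℂ) + Complex.I / (t : ℂ))
  rw [Complex.im_ofReal_add_ofReal_add_I_div, abs_of_pos (inv_pos.2 ht)] at h
  calc vertexKernel γ t x ≤ 1 / t⁻¹ := one_div_le_one_div_of_le (inv_pos.2 ht) h
    _ = t := by rw [one_div, inv_inv]

lemma vertexKernel_le_two_mul_inv (ht : 0 < t) (x : ℝ) :
    vertexKernel γ t x ≤ 2 * (|x + γ| + t⁻¹)⁻¹ := by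
  have hre := Complex.abs_re_le_norm ((γ : ℂ) + (x : ℂ) + Complex.I / (t : ℂ))
  have him := Complex.abs_im_le_norm ((γ : ℂ) + (x : ℂ) + Complex.I / (t : ℂ))
  rw [Complex.re_ofReal_add_ofReal_add_I_div] at hre
  rw [Complex.im_ofReal_add_ofReal_add_I_div, abs_of_pos (inv_pos.2 ht)] at him
  calc vertexKernel γ t x ≤ 1 / ((|x + γ| + t⁻¹) / 2) :=
        one_div_le_one_div_of_le (by positivity) (by linarith)
    _ = 2 * (|x + γ| + t⁻¹)⁻¹ := by rw [one_div_div, div_eq_mul_inv]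

lemma integral_vertexKernel_comp_mul_le_log {a R : ℝ} (ha : 0 < a) (hR : 0 ≤ R)
    (ht : 0 < t) :
    ∫ s in -R..R, vertexKernel γ t (a * s) ≤ 4 / a * log (1 + 2 * R * a * t) := by
  have hcont : Continuous fun s : ℝ => 2 * (|a * s + γ| + t⁻¹)⁻¹ :=
    continuous_const.mul ((by fun_prop : Continuous fun s : ℝ => |a * s + γ| + t⁻¹).inv₀
      fun s => by positivity)
  calc ∫ s in -R..R, vertexKernel γ t (a * s) ≤ ∫ s in -R..R, 2 * (|a * s + γ| + t⁻¹)⁻¹ :=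
        intervalIntegral.integral_mono_on (by linarith)
          ((continuous_vertexKernel ht).comp (continuous_const_mul a) |>.intervalIntegrable _ _)
          (hcont.intervalIntegrable _ _) fun s _ => vertexKernel_le_two_mul_inv ht _
    _ = 2 * ∫ s in -R..R, (|a * s + γ| + t⁻¹)⁻¹ := intervalIntegral.integral_const_mul _ _
    _ ≤ 2 * (2 / a * log (1 + 2 * R * a / t⁻¹)) := by
        gcongr; exact integral_inv_abs_mul_add_add_le_log γ ha (inv_pos.2 ht) hR
    _ = 4 / a * log (1 + 2 * R * a * t) := by rw [div_inv_eq_mul]; ring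

lemma setIntegral_vertexKernel_inner_le_volume {ι : Type*} [Fintype ι] (v : EuclideanSpace ℝ ι)
    (R : ℝ) (ht : 0 < t) :
    ∫ x in closedBall (0 : EuclideanSpace ℝ ι) R, vertexKernel γ t (inner ℝ v x) ≤
      t * volume.real (closedBall (0 : EuclideanSpace ℝ ι) R) :=
  (le_abs_self _).trans <| norm_setIntegral_le_of_norm_le_const measure_closedBall_lt_top
    fun _ _ => (norm_of_nonneg (vertexKernel_nonneg _)).trans_le (vertexKernel_le ht _)

lemma setIntegral_vertexKernel_inner_le_log {ι : Type*} [Fintype ι] {v : EuclideanSpace ℝ ι}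
    (hv : v ≠ 0) {R : ℝ} (hR : 0 ≤ R) (ht : 0 < t) :
    ∫ x in closedBall (0 : EuclideanSpace ℝ ι) R, vertexKernel γ t (inner ℝ v x) ≤
      (2 * R) ^ (Fintype.card ι - 1) * (4 / ‖v‖ * log (1 + 2 * R * ‖v‖ * t)) := by
  refine (setIntegral_closedBall_comp_inner_le hv (continuous_vertexKernel ht)
    vertexKernel_nonneg hR).trans ?_
  gcongr
  exact integral_vertexKernel_comp_mul_le_log (norm_pos_iff.2 hv) hR ht

end vertexKernel

lemma log_one_add_div_sq_le {c ε : ℝ} (hc : 0 ≤ c) (hε : 0 < ε) (hε1 : ε ≤ 1) :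
    log (1 + c / ε ^ 2) ≤ log (1 + c) + 2 * |log ε| := by
  have hε2 : 1 ≤ 1 / ε ^ 2 := by rw [le_div_iff₀ (by positivity), one_mul]; nlinarith
  calc log (1 + c / ε ^ 2) ≤ log ((1 + c) / ε ^ 2) := by
        refine log_le_log (by positivity) ?_
        rw [add_div]; gcongr
    _ = log (1 + c) + 2 * |log ε| := by
        rw [log_div (by positivity) (by positivity), log_pow,
          abs_of_nonpos (log_nonpos hε.le hε1)]
        push_cast; ring

lemma setIntegral_vertexKernel_closedBall_div_le {d : ℕ} {K ε t : ℝ} (γ : ℝ)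
    (ξT : EuclideanSpace ℝ (Fin d)) (hK : 0 ≤ K) (hε : 0 < ε) (ht : 0 < t) :
    ∫ ξ in closedBall (0 : EuclideanSpace ℝ (Fin d)) (K / ε),
        vertexKernel γ t (inner ℝ ξT ξ) ≤
      volume.real (closedBall (0 : EuclideanSpace ℝ (Fin d)) 1) * K ^ d * ε ^ ((1 : ℝ) - d) *
        (t / ε) := by
  refine (setIntegral_vertexKernel_inner_le_volume ξT _ ht).trans_eq ?_
  rw [Measure.addHaar_real_closedBall' _ _ (by positivity), finrank_euclideanSpace_fin,
    rpow_sub hε, rpow_one, rpow_natCast, div_pow]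
  field_simp

lemma setIntegral_vertexKernel_closedBall_div_le_log {d : ℕ} {K ε t : ℝ} (γ : ℝ)
    {ξT : EuclideanSpace ℝ (Fin d)} (hξT : ξT ≠ 0) (hξ : ‖ξT‖ ≤ K / ε) (hε : 0 < ε)
    (hε1 : ε ≤ 1) (ht : 0 < t) (ht1 : t ≤ 1) :
    ∫ ξ in closedBall (0 : EuclideanSpace ℝ (Fin d)) (K / ε),
        vertexKernel γ t (inner ℝ ξT ξ) ≤
      (2 * K) ^ (d - 1) * 4 * (log (1 + 2 * K ^ 2) + 2) * ε ^ ((1 : ℝ) - d) * (1 / ‖ξT‖) *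
        (1 + |log ε|) := by
  have hR : 0 ≤ K / ε := (norm_nonneg _).trans hξ
  have hK : 0 ≤ K := by rwa [le_div_iff₀ hε, zero_mul] at hR
  have hd : 0 < d := Nat.pos_of_ne_zero (by rintro rfl; exact hξT (Subsingleton.elim _ _))
  have hlog : log (1 + 2 * (K / ε) * ‖ξT‖ * t) ≤ (log (1 + 2 * K ^ 2) + 2) * (1 + |log ε|) :=
    calc log (1 + 2 * (K / ε) * ‖ξT‖ * t) ≤ log (1 + 2 * K ^ 2 / ε ^ 2) := by
          refine log_le_log (by positivity) ?_
          calc 1 + 2 * (K / ε) * ‖ξT‖ * t ≤ 1 + 2 * (K / ε) * (K / ε) * 1 := by gcongr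
            _ = 1 + 2 * K ^ 2 / ε ^ 2 := by ring
      _ ≤ log (1 + 2 * K ^ 2) + 2 * |log ε| := log_one_add_div_sq_le (by positivity) hε hε1
      _ ≤ (log (1 + 2 * K ^ 2) + 2) * (1 + |log ε|) := by
          nlinarith [abs_nonneg (log ε), log_nonneg (by nlinarith : (1 : ℝ) ≤ 1 + 2 * K ^ 2)]
  calc _ ≤ (2 * (K / ε)) ^ (d - 1) * (4 / ‖ξT‖ * log (1 + 2 * (K / ε) * ‖ξT‖ * t)) := by
        simpa only [Fintype.card_fin] using
          setIntegral_vertexKernel_inner_le_log (γ := γ) hξT hR ht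
    _ ≤ (2 * (K / ε)) ^ (d - 1) *
          (4 / ‖ξT‖ * ((log (1 + 2 * K ^ 2) + 2) * (1 + |log ε|))) := by gcongr
    _ = _ := by
        obtain ⟨n, rfl⟩ : ∃ n, d = n + 1 := ⟨d - 1, by omega⟩
        rw [rpow_sub hε, rpow_one, rpow_natCast, Nat.add_sub_cancel, mul_pow, div_pow,
          pow_succ]
        field_simp
        ring

open Classical

theorem stmt7_general (d : ℕ) (K : ℝ) :
    ∃ C : ℝ, ∀ (ε t γ : ℝ) (ξT : EuclideanSpace ℝ (Fin d)),
      0 < ε → ε ≤ 1 / 2 → 0 < t → t ≤ 1 → ‖ξT‖ ≤ K / ε →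
      (∫ ξ in Metric.closedBall (0 : EuclideanSpace ℝ (Fin d)) (K / ε),
          1 / ‖(γ : ℂ) + ((inner ℝ ξT ξ : ℝ) : ℂ) + Complex.I / (t : ℂ)‖)
        ≤ C * ε ^ ((1 : ℝ) - d) *
            (if ξT = 0 then t / ε else min (1 / ‖ξT‖) (t / ε)) * (1 + |Real.log ε|) := by
  set C := max (volume.real (closedBall (0 : EuclideanSpace ℝ (Fin d)) 1) * K ^ d)
    ((2 * K) ^ (d - 1) * 4 * (log (1 + 2 * K ^ 2) + 2))
  refine ⟨C, fun ε t γ ξT hε hε2 ht ht1 hξ => ?_⟩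
  have hK : 0 ≤ K := by
    have hR := (norm_nonneg ξT).trans hξ
    rwa [le_div_iff₀ hε, zero_mul] at hR
  have hvol : _ ≤ C * ε ^ ((1 : ℝ) - d) * (t / ε) * (1 + |log ε|) :=
    calc _ ≤ _ := setIntegral_vertexKernel_closedBall_div_le γ ξT hK hε ht
      _ ≤ C * ε ^ ((1 : ℝ) - d) * (t / ε) := by gcongr; exact le_max_left _ _
      _ ≤ _ := le_mul_of_one_le_right (by positivity) (le_add_of_nonneg_right (abs_nonneg _))
  split_ifs with h0
  · exact hvol
  rcases min_choice (1 / ‖ξT‖) (t / ε) with h | h <;> rw [h]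
  · calc _ ≤ _ :=
          setIntegral_vertexKernel_closedBall_div_le_log γ h0 hξ hε (by linarith) ht ht1
      _ ≤ _ := by gcongr; exact le_max_right _ _
  · exact hvol

/-- Degree one linear vertex estimate:
`∫_{|ξ| ≤ K/ε} dξ / |γ + ξ̃·ξ + i/t| ≲ ε^{1-d} min(1/|ξ̃|, t/ε) (1 + |log ε|)`,
the `min` being interpreted as `t/ε` when `ξ̃ = 0`. -/
theorem stmt7 (d : ℕ) (hd : 1 ≤ d) (K : ℝ) (hK : 0 < K) :
    ∃ C : ℝ, ∀ (ε t γ : ℝ) (ξT : EuclideanSpace ℝ (Fin d)),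
      0 < ε → ε ≤ 1 / 2 → 0 < t → t ≤ 1 → ‖ξT‖ ≤ K / ε →
      (∫ ξ in Metric.closedBall (0 : EuclideanSpace ℝ (Fin d)) (K / ε),
          1 / ‖(γ : ℂ) + ((inner ℝ ξT ξ : ℝ) : ℂ) + Complex.I / (t : ℂ)‖)
        ≤ C * ε ^ ((1 : ℝ) - d) *
            (if ξT = 0 then t / ε else min (1 / ‖ξT‖) (t / ε)) * (1 + |Real.log ε|) :=
  stmt7_general d K
end

section
/- Let d ≥ 1, K > 0 and 0 < δ ≤ 1. There is a constant C = C(d,K,δ) such that for all 0 < ε ≤ 1/2, all 0 < t ≤ 1, all γ ∈ ℝ and all ξ̃ ∈ ℝ^d with |ξ̃| ≤ K ε^{−1}: ∫_{|ξ| ≤ K ε^{−1}} 𝟙(|ξ̃| ≥ δ ε^{−1} or |γ + ξ̃·ξ| ≥ δ ε^{−2}) · dξ / |γ + ξ̃·ξ + i/t| ≤ C ε^{2−d} (1 + |log ε|). -/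
/-!
Only two regimes occur. If `|ξ̃| < δ/ε`, the indicator forces `|γ + ξ̃·ξ| ≥ δ/ε²`, so the integrand
is at most `ε²/δ` and the ball of radius `K/ε` has volume `≍ ε^{-d}`. If `|ξ̃| ≥ δ/ε`, drop the
indicator and use `1/t ≥ 1` to bound the integrand by `(1 + (γ + ξ̃·ξ)²)^{-1/2}`. Rotating `ξ̃` onto
the first axis and enclosing the ball in a cube reduces the integral to `(2K/ε)^{d-1}` times a
one-dimensional integral: `|ξ̃|⁻¹ ≤ ε/δ` times the increment of `arsinh` over an interval of length
at most `2K²/ε²`, and since `arsinh` is odd and subadditive on `[0, ∞)` that increment is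
`O(1 + |log ε|)`.
-/

open MeasureTheory Classical Real Set Metric Module

namespace Real

lemma arsinh_add_le {x y : ℝ} (hx : 0 ≤ x) (hy : 0 ≤ y) :
    arsinh (x + y) ≤ arsinh x + arsinh y := by
  rw [← sinh_le_sinh, sinh_arsinh, sinh_add, sinh_arsinh, sinh_arsinh]
  nlinarith [one_le_cosh (arsinh x), one_le_cosh (arsinh y)]

lemma arsinh_sub_arsinh_le_of_nonneg {p q : ℝ} (hp : 0 ≤ p) (hpq : p ≤ q) :
    arsinh q - arsinh p ≤ arsinh (q - p) := by
  have := arsinh_add_le hp (sub_nonneg.2 hpq)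
  rw [add_sub_cancel] at this
  linarith

lemma arsinh_sub_arsinh_le {p q : ℝ} (hpq : p ≤ q) :
    arsinh q - arsinh p ≤ 2 * arsinh (q - p) := by
  have hqp : 0 ≤ arsinh (q - p) := arsinh_nonneg_iff.2 (sub_nonneg.2 hpq)
  rcases le_total 0 p with hp | hp
  · linarith [arsinh_sub_arsinh_le_of_nonneg hp hpq]
  rcases le_total q 0 with hq | hq
  · have := arsinh_sub_arsinh_le_of_nonneg (neg_nonneg.2 hq) (neg_le_neg hpq)
    rw [arsinh_neg, arsinh_neg, neg_sub_neg, neg_sub_neg] at this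
    linarith
  · have hq' : arsinh q ≤ arsinh (q - p) := arsinh_le_arsinh.2 (by linarith)
    have hp' : arsinh (-p) ≤ arsinh (q - p) := arsinh_le_arsinh.2 (by linarith)
    rw [arsinh_neg] at hp'
    linarith

lemma arsinh_le_log {x : ℝ} (hx : 0 ≤ x) : arsinh x ≤ log (2 * x + 1) := by
  have : √(1 + x ^ 2) ≤ 1 + x := sqrt_le_iff.2 ⟨by linarith, by nlinarith⟩
  exact log_le_log (by positivity) (by linarith)

lemma arsinh_div_sq_le {c ε : ℝ} (hc : 0 ≤ c) (hε0 : 0 < ε) (hε1 : ε ≤ 1) :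
    arsinh (c / ε ^ 2) ≤ (log (2 * c + 1) + 2) * (1 + |log ε|) := by
  have hlog : log ((2 * c + 1) / ε ^ 2) = log (2 * c + 1) + 2 * |log ε| := by
    rw [log_div (by positivity) (by positivity), log_pow, abs_of_nonpos (log_nonpos hε0.le hε1)]
    push_cast
    ring
  have hε2 : ε ^ 2 ≤ 1 := pow_le_one₀ hε0.le hε1
  calc arsinh (c / ε ^ 2) ≤ log (2 * (c / ε ^ 2) + 1) := arsinh_le_log (by positivity)
    _ ≤ log ((2 * c + 1) / ε ^ 2) := by
        gcongr
        rw [mul_div_assoc', div_add_one (by positivity),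
          div_le_div_iff_of_pos_right (by positivity)]
        linarith
    _ ≤ (log (2 * c + 1) + 2) * (1 + |log ε|) := by
        rw [hlog]
        nlinarith [log_nonneg (show 1 ≤ 2 * c + 1 by linarith), abs_nonneg (log ε)]

lemma integral_inv_sqrt_one_add_sq (p q : ℝ) :
    ∫ x in p..q, (√(1 + x ^ 2))⁻¹ = arsinh q - arsinh p :=
  intervalIntegral.integral_eq_sub_of_hasDerivAt (fun x _ => hasDerivAt_arsinh x)
    ((Continuous.inv₀ (by fun_prop) fun x => by positivity).intervalIntegrable _ _)

end Real

lemma setIntegral_Icc_inv_sqrt_one_add_sq_comp_le (γ : ℝ) {a R : ℝ} (ha : 0 < a) (hR : 0 ≤ R) :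
    ∫ s in Icc (-R) R, (√(1 + (γ + a * s) ^ 2))⁻¹ ≤ a⁻¹ * (2 * arsinh (2 * a * R)) := by
  rw [integral_Icc_eq_integral_Ioc, ← intervalIntegral.integral_of_le (by linarith),
    intervalIntegral.integral_comp_add_mul (fun x => (√(1 + x ^ 2))⁻¹) ha.ne',
    integral_inv_sqrt_one_add_sq, smul_eq_mul]
  have h := arsinh_sub_arsinh_le (show γ + a * -R ≤ γ + a * R by nlinarith)
  rw [show γ + a * R - (γ + a * -R) = 2 * a * R by ring] at h
  exact mul_le_mul_of_nonneg_left h (inv_nonneg.2 ha.le)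

lemma setIntegral_closedBall_comp_inner {F : Type*} [NormedAddCommGroup F]
    [InnerProductSpace ℝ F] [FiniteDimensional ℝ F] [MeasurableSpace F] [BorelSpace F] {n : ℕ}
    (hF : finrank ℝ F = n + 1) {u : F} (hu : u ≠ 0) (R : ℝ) (G : ℝ → ℝ) :
    ∫ ξ in closedBall (0 : F) R, G (inner ℝ u ξ) =
      ∫ x in closedBall (0 : EuclideanSpace ℝ (Fin (n + 1))) R, G (‖u‖ * x 0) := by
  have hunit : Orthonormal ℝ (({0} : Set (Fin (n + 1))).domRestrict fun _ => ‖u‖⁻¹ • u) := by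
    simp [Set.domRestrict, norm_smul, hu]
  obtain ⟨b, hb⟩ := hunit.exists_orthonormalBasis_extension_of_card_eq (by simpa using hF)
  have hinner : ∀ ξ, inner ℝ u ξ = ‖u‖ * b.repr ξ 0 := fun ξ => by
    rw [b.repr_apply_apply, hb 0 rfl, real_inner_smul_left,
      mul_inv_cancel_left₀ (norm_ne_zero_iff.2 hu)]
  have hball : b.repr ⁻¹' closedBall 0 R = closedBall 0 R := by
    ext ξ
    simp
  simp only [hinner]
  rw [← b.measurePreserving_repr.setIntegral_preimage_emb
    b.repr.toHomeomorph.measurableEmbedding, hball]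

lemma setIntegral_closedBall_comp_apply_zero_le {n : ℕ} {R : ℝ} (hR : 0 ≤ R) {G : ℝ → ℝ}
    (hG : Continuous G) (hG0 : 0 ≤ G) :
    ∫ x in closedBall (0 : EuclideanSpace ℝ (Fin (n + 1))) R, G (x 0) ≤
      (2 * R) ^ n * ∫ s in Icc (-R) R, G s := by
  let Φ := (MeasurableEquiv.toLp 2 (Fin (n + 1) → ℝ)).symm.trans
    (MeasurableEquiv.piFinSuccAbove (fun _ => ℝ) 0)
  have hΦ : MeasurePreserving Φ volume (volume.prod volume) :=
    (EuclideanSpace.volume_preserving_symm_measurableEquiv_toLp _).trans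
      (volume_preserving_piFinSuccAbove _ 0)
  let box : Set (Fin n → ℝ) := Icc (fun _ => -R) (fun _ => R)
  have hsub : closedBall 0 R ⊆ Φ ⁻¹' (Icc (-R) R ×ˢ box) := by
    intro x hx
    rw [mem_closedBall_zero_iff] at hx
    have hcoord : ∀ i, x i ∈ Icc (-R) R := fun i =>
      abs_le.1 ((PiLp.norm_apply_le x i).trans hx)
    exact ⟨hcoord 0, fun j => (hcoord _).1, fun j => (hcoord _).2⟩
  have hint : IntegrableOn (fun p : ℝ × (Fin n → ℝ) => G p.1) (Icc (-R) R ×ˢ box) :=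
    (hG.comp continuous_fst).continuousOn.integrableOn_compact
      (isCompact_Icc.prod isCompact_Icc)
  calc ∫ x in closedBall (0 : EuclideanSpace ℝ (Fin (n + 1))) R, G (x 0)
      ≤ ∫ x in Φ ⁻¹' (Icc (-R) R ×ˢ box), G (Φ x).1 :=
        setIntegral_mono_set ((hΦ.integrableOn_comp_preimage Φ.measurableEmbedding).2 hint)
          (.of_forall fun _ => hG0 _) (.of_forall hsub)
    _ = ∫ p in Icc (-R) R ×ˢ box, G p.1 ∂(volume.prod volume) :=
        hΦ.setIntegral_preimage_emb Φ.measurableEmbedding (fun p => G p.1) _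
    _ = (2 * R) ^ n * ∫ s in Icc (-R) R, G s := by
        have := setIntegral_prod_mul (μ := (volume : Measure ℝ))
          (ν := (volume : Measure (Fin n → ℝ))) G (fun _ => (1 : ℝ)) (Icc (-R) R) box
        simp only [mul_one] at this
        rw [this, setIntegral_const, smul_eq_mul, mul_one, mul_comm, measureReal_def,
          Real.volume_Icc_pi_toReal (fun _ => by linarith)]
        simp [two_mul]

lemma setIntegral_closedBall_inv_sqrt_one_add_sq_inner_le {F : Type*} [NormedAddCommGroup F]
    [InnerProductSpace ℝ F] [FiniteDimensional ℝ F] [MeasurableSpace F] [BorelSpace F] {n : ℕ}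
    (hF : finrank ℝ F = n + 1) (γ : ℝ) {u : F} (hu : u ≠ 0) {R : ℝ} (hR : 0 ≤ R) :
    ∫ ξ in closedBall (0 : F) R, (√(1 + (γ + inner ℝ u ξ) ^ 2))⁻¹ ≤
      (2 * R) ^ n * (‖u‖⁻¹ * (2 * arsinh (2 * ‖u‖ * R))) := by
  rw [setIntegral_closedBall_comp_inner hF hu R fun s => (√(1 + (γ + s) ^ 2))⁻¹]
  calc _ ≤ (2 * R) ^ n * ∫ s in Icc (-R) R, (√(1 + (γ + ‖u‖ * s) ^ 2))⁻¹ :=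
        setIntegral_closedBall_comp_apply_zero_le hR
          (Continuous.inv₀ (by fun_prop) fun x => by positivity) fun x => by positivity
    _ ≤ _ := by
        gcongr
        exact setIntegral_Icc_inv_sqrt_one_add_sq_comp_le γ (norm_pos_iff.2 hu) hR

lemma abs_add_le_norm_add_I_div (γ s t : ℝ) :
    |γ + s| ≤ ‖(γ : ℂ) + (s : ℂ) + Complex.I / (t : ℂ)‖ := by
  simpa using Complex.abs_re_le_norm ((γ : ℂ) + (s : ℂ) + Complex.I / (t : ℂ))

lemma one_div_norm_add_I_div_le (γ s : ℝ) {t : ℝ} (ht0 : 0 < t) (ht1 : t ≤ 1) :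
    1 / ‖(γ : ℂ) + (s : ℂ) + Complex.I / (t : ℂ)‖ ≤ (√(1 + (γ + s) ^ 2))⁻¹ := by
  have hz : (γ : ℂ) + (s : ℂ) + Complex.I / (t : ℂ) =
      ((γ + s : ℝ) : ℂ) + ((t⁻¹ : ℝ) : ℂ) * Complex.I := by
    push_cast
    ring
  have ht : 1 ≤ t⁻¹ := one_le_inv₀ ht0 |>.2 ht1
  rw [hz, Complex.norm_add_mul_I, one_div]
  exact inv_anti₀ (by positivity) (sqrt_le_sqrt (by nlinarith))

noncomputable def vertexIntegrand {d : ℕ} (ε δ t γ : ℝ) (ξT ξ : EuclideanSpace ℝ (Fin d)) : ℝ :=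
  if δ / ε ≤ ‖ξT‖ ∨ δ / ε ^ 2 ≤ |γ + (inner ℝ ξT ξ : ℝ)| then
    1 / ‖(γ : ℂ) + ((inner ℝ ξT ξ : ℝ) : ℂ) + Complex.I / (t : ℂ)‖
  else 0

section vertexIntegrand

variable {d : ℕ} {ε δ t : ℝ} (γ : ℝ) {ξT : EuclideanSpace ℝ (Fin d)}

lemma vertexIntegrand_nonneg (ξ : EuclideanSpace ℝ (Fin d)) :
    0 ≤ vertexIntegrand ε δ t γ ξT ξ := by
  unfold vertexIntegrand
  split_ifs <;> positivity

lemma abs_vertexIntegrand_le_of_norm_lt (hδ : 0 < δ) (hε : 0 < ε) (hξT : ‖ξT‖ < δ / ε)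
    (ξ : EuclideanSpace ℝ (Fin d)) :
    |vertexIntegrand ε δ t γ ξT ξ| ≤ ε ^ 2 / δ := by
  rw [abs_of_nonneg (vertexIntegrand_nonneg γ ξ)]
  unfold vertexIntegrand
  split_ifs with h
  · have hre := h.resolve_left hξT.not_ge
    rw [← one_div_div δ (ε ^ 2)]
    exact one_div_le_one_div_of_le (by positivity) (hre.trans (abs_add_le_norm_add_I_div ..))
  · positivity

lemma vertexIntegrand_le (ht0 : 0 < t) (ht1 : t ≤ 1) (ξ : EuclideanSpace ℝ (Fin d)) :
    vertexIntegrand ε δ t γ ξT ξ ≤ (√(1 + (γ + inner ℝ ξT ξ) ^ 2))⁻¹ := by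
  unfold vertexIntegrand
  split_ifs
  · exact one_div_norm_add_I_div_le γ _ ht0 ht1
  · positivity

end vertexIntegrand

lemma setIntegral_vertexIntegrand_le_of_norm_lt {d : ℕ} {K δ ε : ℝ} (t γ : ℝ)
    {ξT : EuclideanSpace ℝ (Fin d)} (hK : 0 ≤ K) (hδ : 0 < δ) (hε : 0 < ε) (hξT : ‖ξT‖ < δ / ε) :
    ∫ ξ in closedBall 0 (K / ε), vertexIntegrand ε δ t γ ξT ξ ≤
      volume.real (closedBall (0 : EuclideanSpace ℝ (Fin d)) 1) * K ^ d / δ *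
        ε ^ ((2 : ℝ) - d) := by
  calc _ ≤ ε ^ 2 / δ * volume.real (closedBall (0 : EuclideanSpace ℝ (Fin d)) (K / ε)) :=
        (Real.le_norm_self _).trans <| norm_setIntegral_le_of_norm_le_const
          measure_closedBall_lt_top fun ξ _ => abs_vertexIntegrand_le_of_norm_lt γ hδ hε hξT ξ
    _ = _ := by
        rw [Measure.addHaar_real_closedBall' _ _ (by positivity), finrank_euclideanSpace_fin,
          rpow_sub hε, rpow_two, rpow_natCast, div_pow]
        field_simp

lemma setIntegral_vertexIntegrand_le_of_le_norm {n : ℕ} {K δ ε t : ℝ} (γ : ℝ)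
    {ξT : EuclideanSpace ℝ (Fin (n + 1))} (hδ : 0 < δ) (hε0 : 0 < ε) (hε1 : ε ≤ 1) (ht0 : 0 < t)
    (ht1 : t ≤ 1) (hlow : δ / ε ≤ ‖ξT‖) (hup : ‖ξT‖ ≤ K / ε) :
    ∫ ξ in closedBall 0 (K / ε), vertexIntegrand ε δ t γ ξT ξ ≤
      (2 * K) ^ n * (2 / δ) * (log (4 * K ^ 2 + 1) + 2) * ε ^ ((2 : ℝ) - ↑(n + 1)) *
        (1 + |log ε|) := by
  have ha : 0 < ‖ξT‖ := (by positivity : 0 < δ / ε).trans_le hlow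
  have hR : 0 ≤ K / ε := ha.le.trans hup
  have hint : IntegrableOn (fun ξ => (√(1 + (γ + inner ℝ ξT ξ) ^ 2))⁻¹) (closedBall 0 (K / ε)) :=
    (Continuous.inv₀ (by fun_prop) fun _ => by positivity).continuousOn.integrableOn_compact
      (isCompact_closedBall _ _)
  have hinv : ‖ξT‖⁻¹ ≤ ε / δ := by
    rw [← inv_div]
    exact inv_anti₀ (by positivity) hlow
  have harsinh : arsinh (2 * ‖ξT‖ * (K / ε)) ≤ (log (4 * K ^ 2 + 1) + 2) * (1 + |log ε|) := by
    calc arsinh (2 * ‖ξT‖ * (K / ε)) ≤ arsinh (2 * K ^ 2 / ε ^ 2) := by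
          rw [show 2 * K ^ 2 / ε ^ 2 = 2 * (K / ε) * (K / ε) by ring]
          gcongr
      _ ≤ _ := by
          have := arsinh_div_sq_le (by positivity : 0 ≤ 2 * K ^ 2) hε0 hε1
          rwa [← mul_assoc, show (2 : ℝ) * 2 = 4 by norm_num] at this
  calc _ ≤ ∫ ξ in closedBall 0 (K / ε), (√(1 + (γ + inner ℝ ξT ξ) ^ 2))⁻¹ :=
        integral_mono_of_nonneg (.of_forall (vertexIntegrand_nonneg γ)) hint
          (.of_forall (vertexIntegrand_le γ ht0 ht1))
    _ ≤ (2 * (K / ε)) ^ n * (‖ξT‖⁻¹ * (2 * arsinh (2 * ‖ξT‖ * (K / ε)))) :=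
        setIntegral_closedBall_inv_sqrt_one_add_sq_inner_le (by simp) γ (norm_pos_iff.1 ha)
          (by positivity)
    _ ≤ (2 * (K / ε)) ^ n * (ε / δ * (2 * ((log (4 * K ^ 2 + 1) + 2) * (1 + |log ε|)))) := by
        have : 0 ≤ arsinh (2 * ‖ξT‖ * (K / ε)) := arsinh_nonneg_iff.2 (by positivity)
        gcongr
    _ = _ := by
        rw [rpow_sub hε0, rpow_two, rpow_natCast, mul_div_assoc', div_pow]
        field_simp
        ring

theorem stmt8_general (d : ℕ) (K δ : ℝ) (hK : 0 < K) (hδ0 : 0 < δ) :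
    ∃ C : ℝ, ∀ (ε t γ : ℝ) (ξT : EuclideanSpace ℝ (Fin d)),
      0 < ε → ε ≤ 1 / 2 → 0 < t → t ≤ 1 → ‖ξT‖ ≤ K / ε →
      (∫ ξ in Metric.closedBall (0 : EuclideanSpace ℝ (Fin d)) (K / ε),
          (if δ / ε ≤ ‖ξT‖ ∨ δ / ε ^ 2 ≤ |γ + (inner ℝ ξT ξ : ℝ)| then
            1 / ‖(γ : ℂ) + ((inner ℝ ξT ξ : ℝ) : ℂ) + Complex.I / (t : ℂ)‖
          else 0))
        ≤ C * ε ^ ((2 : ℝ) - d) * (1 + |Real.log ε|) := by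
  set CA := volume.real (closedBall (0 : EuclideanSpace ℝ (Fin d)) 1) * K ^ d / δ
  set CB := (2 * K) ^ (d - 1) * (2 / δ) * (log (4 * K ^ 2 + 1) + 2)
  have hCA : 0 ≤ CA := by positivity
  have hCB : 0 ≤ CB := by
    have := log_nonneg (show 1 ≤ 4 * K ^ 2 + 1 by nlinarith)
    positivity
  refine ⟨CA + CB, fun ε t γ ξT hε0 hε1 ht0 ht1 hξT => ?_⟩
  have hpow : 0 ≤ ε ^ ((2 : ℝ) - d) := by positivity
  have hlog : 0 ≤ |log ε| := abs_nonneg _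
  rcases lt_or_ge ‖ξT‖ (δ / ε) with hsmall | hlarge
  · calc _ ≤ CA * ε ^ ((2 : ℝ) - d) :=
          setIntegral_vertexIntegrand_le_of_norm_lt t γ hK.le hδ0 hε0 hsmall
      _ ≤ _ := by nlinarith [mul_nonneg hCA hpow, mul_nonneg hCB hpow]
  · obtain ⟨n, rfl⟩ : ∃ n, d = n + 1 := Nat.exists_eq_succ_of_ne_zero <| by
      rintro rfl
      rw [Subsingleton.elim ξT 0, norm_zero] at hlarge
      exact (div_pos hδ0 hε0).not_ge hlarge
    calc _ ≤ CB * ε ^ ((2 : ℝ) - ↑(n + 1)) * (1 + |log ε|) :=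
          setIntegral_vertexIntegrand_le_of_le_norm γ hδ0 hε0 (by linarith) ht0 ht1 hlarge hξT
      _ ≤ _ := by nlinarith [mul_nonneg hCA hpow, mul_nonneg hCB hpow]

/-- Degree one linear vertex estimate with nondegeneracy restriction:
`∫_{|ξ| ≤ K/ε} 𝟙(|ξ̃| ≥ δ/ε or |γ + ξ̃·ξ| ≥ δ/ε²) dξ / |γ + ξ̃·ξ + i/t|
  ≲ ε^{2-d} (1 + |log ε|)`. -/
theorem stmt8 (d : ℕ) (hd : 1 ≤ d) (K δ : ℝ) (hK : 0 < K) (hδ0 : 0 < δ) (hδ1 : δ ≤ 1) :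
    ∃ C : ℝ, ∀ (ε t γ : ℝ) (ξT : EuclideanSpace ℝ (Fin d)),
      0 < ε → ε ≤ 1 / 2 → 0 < t → t ≤ 1 → ‖ξT‖ ≤ K / ε →
      (∫ ξ in Metric.closedBall (0 : EuclideanSpace ℝ (Fin d)) (K / ε),
          (if δ / ε ≤ ‖ξT‖ ∨ δ / ε ^ 2 ≤ |γ + (inner ℝ ξT ξ : ℝ)| then
            1 / ‖(γ : ℂ) + ((inner ℝ ξT ξ : ℝ) : ℂ) + Complex.I / (t : ℂ)‖
          else 0))
        ≤ C * ε ^ ((2 : ℝ) - d) * (1 + |Real.log ε|) :=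
  stmt8_general d K δ hK hδ0
end
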